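/- arXiv:2105.02014 — 4 statements merged into one kernel-verified Lean document; each statement's English description precedes it below -/
import Mathlib

section
/- Let A, B, C, D ∈ ℝ² be four points, no three collinear, with each pair of opposite sides non-parallel and diagonal points A₁ = AD ∩ BC, B₁ = AB ∩ CD, C₁ = AC ∩ BD. Let r be a line containing none of A, B, C, D and not parallel to any of the six sides, and assume r does not pass through the midpoint of any of the six segments joining pairs of A, B, C, D. For each of the six sides, let P be the intersection of r with that side and let P' be the harmonic conjugate of P with respect to the two quadrangle vertices on that side. Then there exists a nonzero real polynomial q of degree at most 2 vanishing at the six points P' so obtained and at the three diagonal points A₁, B₁, C₁ (Beltrami's generalized nine-point conic). -/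
/-- The value of the degree-≤2 polynomial `a·x² + b·x·y + c·y² + d·x + e·y + f` at a point of
the plane. -/
noncomputable def conicEval (a b c d e f : ℝ) (P : EuclideanSpace ℝ (Fin 2)) : ℝ :=
  a * P 0 ^ 2 + b * P 0 * P 1 + c * P 1 ^ 2 + d * P 0 + e * P 1 + f

section Helpers

local notation "Pt" => EuclideanSpace ℝ (Fin 2)

/-- cross product of two planar vectors -/
private def crs (V W : Pt) : ℝ := V 0 * W 1 - V 1 * W 0

private lemma pt_ext {P Q : Pt} (h0 : P 0 = Q 0) (h1 : P 1 = Q 1) : P = Q := by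
  apply PiLp.ext; intro i; fin_cases i <;> assumption

private lemma coord_add_smul (X Y : Pt) (t : ℝ) (i : Fin 2) :
    (X + t • (Y - X)) i = X i + t * (Y i - X i) := by
  simp [PiLp.add_apply, PiLp.smul_apply, PiLp.sub_apply]

private lemma crs_ne_zero {A B C : Pt} (h : AffineIndependent ℝ ![A, B, C]) :
    crs (B - A) (C - A) ≠ 0 := by
  intro hc
  apply affineIndependent_iff_not_collinear.mp h
  rw [show Set.range ![A, B, C] = {A, B, C} by ext x; simp [Matrix.range_cons]; tauto]
  rw [collinear_iff_of_mem (Set.mem_insert A {B, C})]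
  simp only [crs, PiLp.sub_apply] at hc
  by_cases hx : B 0 - A 0 = 0 ∧ B 1 - A 1 = 0
  · refine ⟨C - A, ?_⟩
    intro p hp
    simp only [Set.mem_insert_iff, Set.mem_singleton_iff] at hp
    rcases hp with h' | h' | h'
    · exact ⟨0, by rw [h']; simp⟩
    · refine ⟨0, by
        rw [h']
        simp only [zero_smul, zero_vadd]
        exact pt_ext (by linarith [hx.1]) (by linarith [hx.2])⟩
    · refine ⟨1, by
        rw [h']
        simp only [one_smul]
        apply pt_ext <;> simp [PiLp.sub_apply]⟩
  · refine ⟨B - A, ?_⟩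
    intro p hp
    simp only [Set.mem_insert_iff, Set.mem_singleton_iff] at hp
    rcases hp with h' | h' | h'
    · exact ⟨0, by rw [h']; simp⟩
    · refine ⟨1, by
        rw [h']
        simp only [one_smul]
        apply pt_ext <;> simp [PiLp.sub_apply]⟩
    · rcases (not_and_or.mp hx) with hx0 | hx1
      · refine ⟨(C 0 - A 0) / (B 0 - A 0), ?_⟩
        rw [h']
        apply pt_ext <;>
          simp only [PiLp.smul_apply, PiLp.sub_apply, PiLp.add_apply, vadd_eq_add,
            smul_eq_mul] <;> field_simp <;> nlinarith [hc]
      · refine ⟨(C 1 - A 1) / (B 1 - A 1), ?_⟩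
        rw [h']
        apply pt_ext <;>
          simp only [PiLp.smul_apply, PiLp.sub_apply, PiLp.add_apply, vadd_eq_add,
            smul_eq_mul] <;> field_simp <;> nlinarith [hc]

private lemma mem_line_iff {p q X : Pt} (hpq : p ≠ q) :
    X ∈ line[ℝ, p, q] ↔ crs (q - p) (X - p) = 0 := by
  have hX : X = (X - p) +ᵥ p := by simp
  rw [hX, vadd_left_mem_affineSpan_pair]
  constructor
  · rintro ⟨r, hr⟩
    have h0 : r * (q 0 - p 0) = X 0 - p 0 := by
      have := congrArg (fun Y => Y 0) hr
      simpa [PiLp.smul_apply, PiLp.sub_apply, vsub_eq_sub] using this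
    have h1 : r * (q 1 - p 1) = X 1 - p 1 := by
      have := congrArg (fun Y => Y 1) hr
      simpa [PiLp.smul_apply, PiLp.sub_apply, vsub_eq_sub] using this
    simp only [crs, PiLp.sub_apply, PiLp.add_apply, vadd_eq_add]
    linear_combination (q 1 - p 1) * h0 - (q 0 - p 0) * h1
  · intro hc
    have hne : ¬ (q 0 - p 0 = 0 ∧ q 1 - p 1 = 0) := by
      rintro ⟨e0, e1⟩
      exact hpq (pt_ext (by linarith) (by linarith)).symm
    simp only [crs, PiLp.sub_apply, PiLp.add_apply, vadd_eq_add] at hc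
    rcases not_and_or.mp hne with h0 | h1
    · refine ⟨(X 0 - p 0) / (q 0 - p 0), ?_⟩
      apply pt_ext <;>
        simp only [PiLp.smul_apply, PiLp.sub_apply, smul_eq_mul, vsub_eq_sub] <;>
        field_simp <;> nlinarith [hc]
    · refine ⟨(X 1 - p 1) / (q 1 - p 1), ?_⟩
      apply pt_ext <;>
        simp only [PiLp.smul_apply, PiLp.sub_apply, smul_eq_mul, vsub_eq_sub] <;>
        field_simp <;> nlinarith [hc]

private lemma parallel_of_rel {A B C D : Pt} (k : ℝ) (hk : k ≠ 0) (h : D - C = k • (B - A)) :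
    AffineSubspace.Parallel line[ℝ, A, B] line[ℝ, C, D] := by
  rw [AffineSubspace.affineSpan_pair_parallel_iff_vectorSpan_eq, vectorSpan_pair, vectorSpan_pair]
  have h2 : A -ᵥ B = k⁻¹ • (C -ᵥ D) := by
    have : C - D = k • (A - B) := by
      linear_combination (norm := module) -h
    rw [show A -ᵥ B = A - B from rfl, show C -ᵥ D = C - D from rfl, this, smul_smul,
      inv_mul_cancel₀ hk, one_smul]
  rw [h2, Submodule.span_singleton_smul_eq (isUnit_iff_ne_zero.mpr (inv_ne_zero hk)) _]

private lemma exists_smul_of_crs {X Y : Pt} (hc : crs X Y = 0) (hX : ¬(X 0 = 0 ∧ X 1 = 0)) :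
    ∃ k : ℝ, Y = k • X := by
  simp only [crs] at hc
  rcases not_and_or.mp hX with h0 | h1
  · refine ⟨Y 0 / X 0, ?_⟩
    apply pt_ext <;> simp only [PiLp.smul_apply, smul_eq_mul] <;> field_simp
    linear_combination hc
  · refine ⟨Y 1 / X 1, ?_⟩
    apply pt_ext <;> simp only [PiLp.smul_apply, smul_eq_mul] <;> field_simp
    linear_combination -hc

private lemma eq_pt_of_crs {V W P Q : Pt} (h1 : crs V (P - Q) = 0) (h2 : crs W (P - Q) = 0)
    (hVW : crs V W ≠ 0) : P = Q := by
  simp only [crs, PiLp.sub_apply] at h1 h2 hVW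
  have e0 : P 0 - Q 0 = 0 := by
    have h3 : (V 0 * W 1 - V 1 * W 0) * (P 0 - Q 0) = 0 := by
      linear_combination W 0 * h1 - V 0 * h2
    rcases mul_eq_zero.mp h3 with h | h
    · exact absurd h hVW
    · exact h
  have e1 : P 1 - Q 1 = 0 := by
    have h3 : (V 0 * W 1 - V 1 * W 0) * (P 1 - Q 1) = 0 := by
      linear_combination W 1 * h1 - V 1 * h2
    rcases mul_eq_zero.mp h3 with h | h
    · exact absurd h hVW
    · exact h
  exact pt_ext (by linarith) (by linarith)

private lemma inter_eq {V W A B P Q : Pt} (hP1 : crs V (P - A) = 0) (hP2 : crs W (P - B) = 0)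
    (hQ1 : crs V (Q - A) = 0) (hQ2 : crs W (Q - B) = 0) (hVW : crs V W ≠ 0) : P = Q := by
  refine eq_pt_of_crs (V := V) (W := W) ?_ ?_ hVW
  · simp only [crs, PiLp.sub_apply] at hP1 hQ1 ⊢
    linear_combination hP1 - hQ1
  · simp only [crs, PiLp.sub_apply] at hP2 hQ2 ⊢
    linear_combination hP2 - hQ2

private lemma crs_affine (p q X Y : Pt) (s : ℝ) :
    crs (q - p) (X + s • (Y - X) - p) =
      crs (q - p) (X - p) + s * (crs (q - p) (Y - p) - crs (q - p) (X - p)) := by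
  simp only [crs, PiLp.sub_apply, PiLp.add_apply, PiLp.smul_apply, smul_eq_mul]
  ring

private lemma crs_midpoint (p q X Y : Pt) :
    crs (q - p) (midpoint ℝ X Y - p) =
      (crs (q - p) (X - p) + crs (q - p) (Y - p)) / 2 := by
  rw [midpoint_eq_smul_add]
  simp only [crs, PiLp.sub_apply, PiLp.add_apply, PiLp.smul_apply, smul_eq_mul]
  norm_num
  ring

private lemma harm {α β s : ℝ} (hα : α ≠ 0) (hαβ : α + β ≠ 0) (hs : α + s * (β - α) = 0) :
    s / (2 * s - 1) = α / (α + β) := by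
  have h2s : 2 * s - 1 ≠ 0 := by
    intro h
    apply hαβ
    have hs' : s = 1 / 2 := by linarith
    rw [hs'] at hs
    linarith
  rw [div_eq_div_iff h2s hαβ]
  linear_combination hs

end Helpers

set_option maxHeartbeats 4000000 in
/-- **Beltrami's generalized nine-point conic.** Given a complete quadrangle `A B C D` with
diagonal points `A₁, B₁, C₁` and a line `r` through none of the vertices, not parallel to
any side and not through any side midpoint, the harmonic conjugates, with respect to the two
vertices on each side, of the six intersection points of `r` with the sides, together with
the three diagonal points, lie on one conic.  Here the intersection of `r` with side `AB` is
the point `A + s•(B - A) ∈ r` and its harmonic conjugate is `A + (s/(2s-1))•(B - A)`. -/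
theorem beltrami_nine_point_conic
    (A B C D A₁ B₁ C₁ : EuclideanSpace ℝ (Fin 2))
    (h1 : AffineIndependent ℝ ![A, B, C])
    (h2 : AffineIndependent ℝ ![A, B, D])
    (h3 : AffineIndependent ℝ ![A, C, D])
    (h4 : AffineIndependent ℝ ![B, C, D])
    (hpar1 : ¬ AffineSubspace.Parallel line[ℝ, A, B] line[ℝ, C, D])
    (hpar2 : ¬ AffineSubspace.Parallel line[ℝ, A, C] line[ℝ, B, D])
    (hpar3 : ¬ AffineSubspace.Parallel line[ℝ, A, D] line[ℝ, B, C])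
    (hA₁1 : A₁ ∈ line[ℝ, A, D]) (hA₁2 : A₁ ∈ line[ℝ, B, C])
    (hB₁1 : B₁ ∈ line[ℝ, A, B]) (hB₁2 : B₁ ∈ line[ℝ, C, D])
    (hC₁1 : C₁ ∈ line[ℝ, A, C]) (hC₁2 : C₁ ∈ line[ℝ, B, D])
    -- `r` is a line of the plane
    (r : AffineSubspace ℝ (EuclideanSpace ℝ (Fin 2)))
    (hr : ∃ p q : EuclideanSpace ℝ (Fin 2), p ≠ q ∧ r = line[ℝ, p, q])
    -- `r` contains none of the four vertices
    (hrA : A ∉ r) (hrB : B ∉ r) (hrC : C ∉ r) (hrD : D ∉ r)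
    -- `r` is parallel to none of the six sides
    (hr1 : ¬ AffineSubspace.Parallel r line[ℝ, A, B])
    (hr2 : ¬ AffineSubspace.Parallel r line[ℝ, A, C])
    (hr3 : ¬ AffineSubspace.Parallel r line[ℝ, A, D])
    (hr4 : ¬ AffineSubspace.Parallel r line[ℝ, B, C])
    (hr5 : ¬ AffineSubspace.Parallel r line[ℝ, B, D])
    (hr6 : ¬ AffineSubspace.Parallel r line[ℝ, C, D])
    -- `r` passes through none of the six side midpoints
    (hm1 : midpoint ℝ A B ∉ r) (hm2 : midpoint ℝ A C ∉ r) (hm3 : midpoint ℝ A D ∉ r)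
    (hm4 : midpoint ℝ B C ∉ r) (hm5 : midpoint ℝ B D ∉ r) (hm6 : midpoint ℝ C D ∉ r)
    -- the intersection points of `r` with the six sides
    (sAB sAC sAD sBC sBD sCD : ℝ)
    (hPAB : A + sAB • (B - A) ∈ r)
    (hPAC : A + sAC • (C - A) ∈ r)
    (hPAD : A + sAD • (D - A) ∈ r)
    (hPBC : B + sBC • (C - B) ∈ r)
    (hPBD : B + sBD • (D - B) ∈ r)
    (hPCD : C + sCD • (D - C) ∈ r) :
    ∃ a b c d e f : ℝ, (a, b, c, d, e, f) ≠ (0, 0, 0, 0, 0, 0) ∧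
      conicEval a b c d e f (A + (sAB / (2 * sAB - 1)) • (B - A)) = 0 ∧
      conicEval a b c d e f (A + (sAC / (2 * sAC - 1)) • (C - A)) = 0 ∧
      conicEval a b c d e f (A + (sAD / (2 * sAD - 1)) • (D - A)) = 0 ∧
      conicEval a b c d e f (B + (sBC / (2 * sBC - 1)) • (C - B)) = 0 ∧
      conicEval a b c d e f (B + (sBD / (2 * sBD - 1)) • (D - B)) = 0 ∧
      conicEval a b c d e f (C + (sCD / (2 * sCD - 1)) • (D - C)) = 0 ∧
      conicEval a b c d e f A₁ = 0 ∧
      conicEval a b c d e f B₁ = 0 ∧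
      conicEval a b c d e f C₁ = 0 := by
  obtain ⟨p, q, hpq, rfl⟩ := hr
  have hmem : ∀ X : EuclideanSpace ℝ (Fin 2),
      X ∈ line[ℝ, p, q] ↔ crs (q - p) (X - p) = 0 := fun X => mem_line_iff hpq
  -- the line functional values at the four vertices
  obtain ⟨α, hα⟩ : ∃ x : ℝ, x = crs (q - p) (A - p) := ⟨_, rfl⟩
  obtain ⟨β, hβ⟩ : ∃ x : ℝ, x = crs (q - p) (B - p) := ⟨_, rfl⟩
  obtain ⟨γ, hγ⟩ : ∃ x : ℝ, x = crs (q - p) (C - p) := ⟨_, rfl⟩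
  obtain ⟨δ, hδ⟩ : ∃ x : ℝ, x = crs (q - p) (D - p) := ⟨_, rfl⟩
  have hαne : α ≠ 0 := by rw [hα]; intro h; exact hrA ((hmem A).mpr h)
  have hβne : β ≠ 0 := by rw [hβ]; intro h; exact hrB ((hmem B).mpr h)
  have hγne : γ ≠ 0 := by rw [hγ]; intro h; exact hrC ((hmem C).mpr h)
  have hδne : δ ≠ 0 := by rw [hδ]; intro h; exact hrD ((hmem D).mpr h)
  -- side equations
  have eAB : α + sAB * (β - α) = 0 := by
    have h := (hmem _).mp hPAB; rw [crs_affine] at h; rw [hα, hβ]; exact h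
  have eAC : α + sAC * (γ - α) = 0 := by
    have h := (hmem _).mp hPAC; rw [crs_affine] at h; rw [hα, hγ]; exact h
  have eAD : α + sAD * (δ - α) = 0 := by
    have h := (hmem _).mp hPAD; rw [crs_affine] at h; rw [hα, hδ]; exact h
  have eBC : β + sBC * (γ - β) = 0 := by
    have h := (hmem _).mp hPBC; rw [crs_affine] at h; rw [hβ, hγ]; exact h
  have eBD : β + sBD * (δ - β) = 0 := by
    have h := (hmem _).mp hPBD; rw [crs_affine] at h; rw [hβ, hδ]; exact h
  have eCD : γ + sCD * (δ - γ) = 0 := by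
    have h := (hmem _).mp hPCD; rw [crs_affine] at h; rw [hγ, hδ]; exact h
  -- midpoint conditions
  have hαβ : α + β ≠ 0 := by
    intro h; apply hm1; apply (hmem _).mpr
    rw [crs_midpoint, ← hα, ← hβ, h]; norm_num
  have hαγ : α + γ ≠ 0 := by
    intro h; apply hm2; apply (hmem _).mpr
    rw [crs_midpoint, ← hα, ← hγ, h]; norm_num
  have hαδ : α + δ ≠ 0 := by
    intro h; apply hm3; apply (hmem _).mpr
    rw [crs_midpoint, ← hα, ← hδ, h]; norm_num
  have hβγ : β + γ ≠ 0 := by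
    intro h; apply hm4; apply (hmem _).mpr
    rw [crs_midpoint, ← hβ, ← hγ, h]; norm_num
  have hβδ : β + δ ≠ 0 := by
    intro h; apply hm5; apply (hmem _).mpr
    rw [crs_midpoint, ← hβ, ← hδ, h]; norm_num
  have hγδ : γ + δ ≠ 0 := by
    intro h; apply hm6; apply (hmem _).mpr
    rw [crs_midpoint, ← hγ, ← hδ, h]; norm_num
  -- harmonic conjugate parameters
  have htAB : sAB / (2 * sAB - 1) = α / (α + β) := harm hαne hαβ eAB
  have htAC : sAC / (2 * sAC - 1) = α / (α + γ) := harm hαne hαγ eAC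
  have htAD : sAD / (2 * sAD - 1) = α / (α + δ) := harm hαne hαδ eAD
  have htBC : sBC / (2 * sBC - 1) = β / (β + γ) := harm hβne hβγ eBC
  have htBD : sBD / (2 * sBD - 1) = β / (β + δ) := harm hβne hβδ eBD
  have htCD : sCD / (2 * sCD - 1) = γ / (γ + δ) := harm hγne hγδ eCD
  -- barycentric coordinates of D with respect to A, B, C
  have hM0 := crs_ne_zero h1
  obtain ⟨M, hMv⟩ : ∃ x : ℝ, x = crs (B - A) (C - A) := ⟨_, rfl⟩
  have hMne : M ≠ 0 := by rw [hMv]; exact hM0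
  obtain ⟨v, hv⟩ : ∃ x : ℝ, x = crs (D - A) (C - A) / M := ⟨_, rfl⟩
  obtain ⟨w, hw⟩ : ∃ x : ℝ, x = crs (B - A) (D - A) / M := ⟨_, rfl⟩
  have hDc0 : D 0 = A 0 + v * (B 0 - A 0) + w * (C 0 - A 0) := by
    rw [hv, hw, hMv]
    simp only [crs, PiLp.sub_apply]
    have h := hM0
    simp only [crs, PiLp.sub_apply] at h
    rw [div_mul_eq_mul_div, div_mul_eq_mul_div, add_assoc, ← add_div, add_div' _ _ _ h, eq_div_iff h]
    ring
  have hDc1 : D 1 = A 1 + v * (B 1 - A 1) + w * (C 1 - A 1) := by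
    rw [hv, hw, hMv]
    simp only [crs, PiLp.sub_apply]
    have h := hM0
    simp only [crs, PiLp.sub_apply] at h
    rw [div_mul_eq_mul_div, div_mul_eq_mul_div, add_assoc, ← add_div, add_div' _ _ _ h, eq_div_iff h]
    ring
  -- the line functional at D in barycentric terms
  have hδv : δ = (1 - v - w) * α + v * β + w * γ := by
    rw [hδ, hα, hβ, hγ]
    simp only [crs, PiLp.sub_apply]
    linear_combination (q 0 - p 0) * hDc1 - (q 1 - p 1) * hDc0
  -- nonzero barycentric coordinates
  have hvne : v ≠ 0 := by
    rw [hv]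
    apply div_ne_zero _ hMne
    intro h
    apply crs_ne_zero h3
    simp only [crs, PiLp.sub_apply] at h ⊢
    linarith
  have hwne : w ≠ 0 := by
    rw [hw]
    exact div_ne_zero (crs_ne_zero h2) hMne
  have hune : 1 - v - w ≠ 0 := by
    intro h
    apply crs_ne_zero h4
    simp only [crs, PiLp.sub_apply]
    linear_combination (C 0 - B 0) * hDc1 - (C 1 - B 1) * hDc0 -
      ((C 0 - B 0) * (B 1 - A 1) - (C 1 - B 1) * (B 0 - A 0)) * h
  -- non-parallelism conditions on opposite sides
  have hvw : v + w ≠ 0 := by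
    intro h
    apply hpar3
    refine parallel_of_rel (-(1 / v)) (by simp [hvne]) ?_
    apply pt_ext <;>
      simp only [PiLp.sub_apply, PiLp.smul_apply, smul_eq_mul]
    · rw [hDc0]; field_simp; linear_combination (C 0 - A 0) * h
    · rw [hDc1]; field_simp; linear_combination (C 1 - A 1) * h
  have h1w : 1 - w ≠ 0 := by
    intro h
    apply hpar1
    refine parallel_of_rel v hvne ?_
    apply pt_ext <;>
      simp only [PiLp.sub_apply, PiLp.smul_apply, smul_eq_mul]
    · rw [hDc0]; linear_combination -(C 0 - A 0) * h
    · rw [hDc1]; linear_combination -(C 1 - A 1) * h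
  have h1v : 1 - v ≠ 0 := by
    intro h
    apply hpar2
    refine parallel_of_rel w hwne ?_
    apply pt_ext <;>
      simp only [PiLp.sub_apply, PiLp.smul_apply, smul_eq_mul]
    · rw [hDc0]; linear_combination -(B 0 - A 0) * h
    · rw [hDc1]; linear_combination -(B 1 - A 1) * h
  -- distinctness of vertices
  have hAB : A ≠ B := by
    intro h; apply hM0
    rw [h]
    simp only [crs, PiLp.sub_apply]
    ring
  have hAC : A ≠ C := by
    intro h; apply hM0
    rw [h]
    simp only [crs, PiLp.sub_apply]
    ring
  have hAD : A ≠ D := by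
    intro h; apply crs_ne_zero h2
    rw [h]
    simp only [crs, PiLp.sub_apply]
    ring
  have hBC : B ≠ C := by
    intro h; apply hM0
    rw [h]
    simp only [crs, PiLp.sub_apply]
    ring
  have hBD : B ≠ D := by
    intro h; apply crs_ne_zero h2
    rw [h]
    simp only [crs, PiLp.sub_apply]
    ring
  have hCD : C ≠ D := by
    intro h; apply crs_ne_zero h3
    rw [h]
    simp only [crs, PiLp.sub_apply]
    ring
  -- nonvanishing of direction vectors
  have hvecDA : ¬((D - A) 0 = 0 ∧ (D - A) 1 = 0) := by
    rintro ⟨e0, e1⟩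
    apply hAD
    simp only [PiLp.sub_apply] at e0 e1
    exact pt_ext (by linarith) (by linarith)
  have hvecBA : ¬((B - A) 0 = 0 ∧ (B - A) 1 = 0) := by
    rintro ⟨e0, e1⟩
    apply hAB
    simp only [PiLp.sub_apply] at e0 e1
    exact pt_ext (by linarith) (by linarith)
  have hvecCA : ¬((C - A) 0 = 0 ∧ (C - A) 1 = 0) := by
    rintro ⟨e0, e1⟩
    apply hAC
    simp only [PiLp.sub_apply] at e0 e1
    exact pt_ext (by linarith) (by linarith)
  -- the three "non-parallel diagonal" cross products
  have hΔ3 : crs (D - A) (C - B) ≠ 0 := by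
    intro h0
    obtain ⟨k, hk⟩ := exists_smul_of_crs h0 hvecDA
    have hkne : k ≠ 0 := by
      intro h
      rw [h, zero_smul, sub_eq_zero] at hk
      exact hBC hk.symm
    exact hpar3 (parallel_of_rel k hkne hk)
  have hΔ1 : crs (B - A) (D - C) ≠ 0 := by
    intro h0
    obtain ⟨k, hk⟩ := exists_smul_of_crs h0 hvecBA
    have hkne : k ≠ 0 := by
      intro h
      rw [h, zero_smul, sub_eq_zero] at hk
      exact hCD hk.symm
    exact hpar1 (parallel_of_rel k hkne hk)
  have hΔ2 : crs (C - A) (D - B) ≠ 0 := by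
    intro h0
    obtain ⟨k, hk⟩ := exists_smul_of_crs h0 hvecCA
    have hkne : k ≠ 0 := by
      intro h
      rw [h, zero_smul, sub_eq_zero] at hk
      exact hBD hk.symm
    exact hpar2 (parallel_of_rel k hkne hk)
  -- locate the diagonal points
  have hA₁eq : A₁ = A + (1 / (v + w)) • (D - A) := by
    refine inter_eq (V := D - A) (W := C - B) (A := A) (B := B)
      ((mem_line_iff hAD).mp hA₁1) ((mem_line_iff hBC).mp hA₁2) ?_ ?_ hΔ3
    · simp only [crs, PiLp.sub_apply, coord_add_smul]
      ring
    · simp only [crs, PiLp.sub_apply, coord_add_smul]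
      rw [hDc0, hDc1]
      field_simp
      ring
  have hB₁eq : B₁ = A + (v / (1 - w)) • (B - A) := by
    refine inter_eq (V := B - A) (W := D - C) (A := A) (B := C)
      ((mem_line_iff hAB).mp hB₁1) ((mem_line_iff hCD).mp hB₁2) ?_ ?_ hΔ1
    · simp only [crs, PiLp.sub_apply, coord_add_smul]
      ring
    · simp only [crs, PiLp.sub_apply, coord_add_smul]
      rw [hDc0, hDc1]
      field_simp
      ring
  have hC₁eq : C₁ = A + (w / (1 - v)) • (C - A) := by
    refine inter_eq (V := C - A) (W := D - B) (A := A) (B := B)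
      ((mem_line_iff hAC).mp hC₁1) ((mem_line_iff hBD).mp hC₁2) ?_ ?_ hΔ2
    · simp only [crs, PiLp.sub_apply, coord_add_smul]
      ring
    · simp only [crs, PiLp.sub_apply, coord_add_smul]
      rw [hDc0, hDc1]
      field_simp
      ring
  -- the conic coefficients
  obtain ⟨cA, hcA⟩ : ∃ x : ℝ, x = α * v * w := ⟨_, rfl⟩
  obtain ⟨cB, hcB⟩ : ∃ x : ℝ, x = β * (1 - v - w) * w := ⟨_, rfl⟩
  obtain ⟨cC, hcC⟩ : ∃ x : ℝ, x = γ * (1 - v - w) * v := ⟨_, rfl⟩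
  obtain ⟨c2f, hc2f⟩ : ∃ x : ℝ, x = -((1 - v - w) * (v * β + w * γ)) := ⟨_, rfl⟩
  obtain ⟨c2g, hc2g⟩ : ∃ x : ℝ, x = -(v * ((1 - v - w) * α + w * γ)) := ⟨_, rfl⟩
  obtain ⟨c2h, hc2h⟩ : ∃ x : ℝ, x = -(w * ((1 - v - w) * α + v * β)) := ⟨_, rfl⟩
  obtain ⟨py0, hpy0⟩ : ∃ x : ℝ, x = C 1 - A 1 := ⟨_, rfl⟩
  obtain ⟨py1, hpy1⟩ : ∃ x : ℝ, x = A 0 - C 0 := ⟨_, rfl⟩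
  obtain ⟨py2, hpy2⟩ : ∃ x : ℝ, x = A 1 * (C 0 - A 0) - A 0 * (C 1 - A 1) := ⟨_, rfl⟩
  obtain ⟨qz0, hqz0⟩ : ∃ x : ℝ, x = A 1 - B 1 := ⟨_, rfl⟩
  obtain ⟨qz1, hqz1⟩ : ∃ x : ℝ, x = B 0 - A 0 := ⟨_, rfl⟩
  obtain ⟨qz2, hqz2⟩ : ∃ x : ℝ, x = A 0 * (B 1 - A 1) - A 1 * (B 0 - A 0) := ⟨_, rfl⟩
  obtain ⟨rx0, hrx0⟩ : ∃ x : ℝ, x = -py0 - qz0 := ⟨_, rfl⟩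
  obtain ⟨rx1, hrx1⟩ : ∃ x : ℝ, x = -py1 - qz1 := ⟨_, rfl⟩
  obtain ⟨rx2, hrx2⟩ : ∃ x : ℝ, x = M - py2 - qz2 := ⟨_, rfl⟩
  obtain ⟨ca, hca⟩ : ∃ x : ℝ, x = cA * rx0 ^ 2 + cB * py0 ^ 2 + cC * qz0 ^ 2 +
      c2f * (py0 * qz0) + c2g * (qz0 * rx0) + c2h * (rx0 * py0) := ⟨_, rfl⟩
  obtain ⟨cb, hcb⟩ : ∃ x : ℝ, x = 2 * cA * rx0 * rx1 + 2 * cB * py0 * py1 + 2 * cC * qz0 * qz1 +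
      c2f * (py0 * qz1 + py1 * qz0) + c2g * (qz0 * rx1 + qz1 * rx0) +
      c2h * (rx0 * py1 + rx1 * py0) := ⟨_, rfl⟩
  obtain ⟨cc, hcc⟩ : ∃ x : ℝ, x = cA * rx1 ^ 2 + cB * py1 ^ 2 + cC * qz1 ^ 2 +
      c2f * (py1 * qz1) + c2g * (qz1 * rx1) + c2h * (rx1 * py1) := ⟨_, rfl⟩
  obtain ⟨cd, hcd⟩ : ∃ x : ℝ, x = 2 * cA * rx0 * rx2 + 2 * cB * py0 * py2 + 2 * cC * qz0 * qz2 +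
      c2f * (py0 * qz2 + py2 * qz0) + c2g * (qz0 * rx2 + qz2 * rx0) +
      c2h * (rx0 * py2 + rx2 * py0) := ⟨_, rfl⟩
  obtain ⟨ce, hce⟩ : ∃ x : ℝ, x = 2 * cA * rx1 * rx2 + 2 * cB * py1 * py2 + 2 * cC * qz1 * qz2 +
      c2f * (py1 * qz2 + py2 * qz1) + c2g * (qz1 * rx2 + qz2 * rx1) +
      c2h * (rx1 * py2 + rx2 * py1) := ⟨_, rfl⟩
  obtain ⟨cf, hcf⟩ : ∃ x : ℝ, x = cA * rx2 ^ 2 + cB * py2 ^ 2 + cC * qz2 ^ 2 +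
      c2f * (py2 * qz2) + c2g * (qz2 * rx2) + c2h * (rx2 * py2) := ⟨_, rfl⟩
  have hQ : ∀ X : EuclideanSpace ℝ (Fin 2), conicEval ca cb cc cd ce cf X =
      cA * (rx0 * X 0 + rx1 * X 1 + rx2) ^ 2 + cB * (py0 * X 0 + py1 * X 1 + py2) ^ 2 +
      cC * (qz0 * X 0 + qz1 * X 1 + qz2) ^ 2 +
      c2f * ((py0 * X 0 + py1 * X 1 + py2) * (qz0 * X 0 + qz1 * X 1 + qz2)) +
      c2g * ((qz0 * X 0 + qz1 * X 1 + qz2) * (rx0 * X 0 + rx1 * X 1 + rx2)) +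
      c2h * ((rx0 * X 0 + rx1 * X 1 + rx2) * (py0 * X 0 + py1 * X 1 + py2)) := by
    intro X
    rw [hca, hcb, hcc, hcd, hce, hcf]
    simp only [conicEval]
    ring
  have hαδ' : α + ((1 - v - w) * α + v * β + w * γ) ≠ 0 := by rw [← hδv]; exact hαδ
  have hβδ' : β + ((1 - v - w) * α + v * β + w * γ) ≠ 0 := by rw [← hδv]; exact hβδ
  have hγδ' : γ + ((1 - v - w) * α + v * β + w * γ) ≠ 0 := by rw [← hδv]; exact hγδ
  rw [hδv] at htAD htBD htCD
  refine ⟨ca, cb, cc, cd, ce, cf, ?_, ?_, ?_, ?_, ?_, ?_, ?_, ?_, ?_, ?_⟩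
  · -- nondegeneracy
    have hvalA : conicEval ca cb cc cd ce cf A = cA * M ^ 2 := by
      rw [hQ A, hrx0, hrx1, hrx2, hpy0, hpy1, hpy2, hqz0, hqz1, hqz2]
      ring
    intro hzero
    simp only [Prod.mk.injEq] at hzero
    obtain ⟨z1, z2, z3, z4, z5, z6⟩ := hzero
    rw [z1, z2, z3, z4, z5, z6] at hvalA
    have h0 : (0 : ℝ) = cA * M ^ 2 := by simpa [conicEval] using hvalA
    exact (mul_ne_zero (by rw [hcA]; exact mul_ne_zero (mul_ne_zero hαne hvne) hwne)
      (pow_ne_zero 2 hMne)) h0.symm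
  · have ht2 : (sAB / (2 * sAB - 1)) * (α + β) = α := by rw [htAB]; exact div_mul_cancel₀ _ hαβ
    have hy : py0 * (A + (sAB / (2 * sAB - 1)) • (B - A)) 0 + py1 * (A + (sAB / (2 * sAB - 1)) • (B - A)) 1 + py2 = (sAB / (2 * sAB - 1)) * M := by
      simp only [coord_add_smul]
      rw [hpy0, hpy1, hpy2, hMv]
      simp only [crs, PiLp.sub_apply]
      ring
    have hz : qz0 * (A + (sAB / (2 * sAB - 1)) • (B - A)) 0 + qz1 * (A + (sAB / (2 * sAB - 1)) • (B - A)) 1 + qz2 = (0 : ℝ) := by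
      simp only [coord_add_smul]
      rw [hqz0, hqz1, hqz2]
      simp only [crs, PiLp.sub_apply]
      ring
    have hx : rx0 * (A + (sAB / (2 * sAB - 1)) • (B - A)) 0 + rx1 * (A + (sAB / (2 * sAB - 1)) • (B - A)) 1 + rx2 = M - ((sAB / (2 * sAB - 1)) * M) - ((0 : ℝ)) := by
      rw [hrx0, hrx1, hrx2]
      linear_combination -hy - hz
    rw [hQ, hy, hz, hx, hcA, hcB, hcC, hc2f, hc2g, hc2h]
    refine mul_left_cancel₀ (pow_ne_zero 2 hαβ) ?_
    linear_combination ((M^2 * ((α * v * w) + (β * (1 - v - w) * w) - (-(w * ((1 - v - w) * α + v * β))))) * (α + β) * (sAB / (2 * sAB - 1)) + ((M^2 * (-2 * (α * v * w) + (-(w * ((1 - v - w) * α + v * β))))) * (α + β) + (M^2 * ((α * v * w) + (β * (1 - v - w) * w) - (-(w * ((1 - v - w) * α + v * β))))) * (α))) * ht2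
  · have ht2 : (sAC / (2 * sAC - 1)) * (α + γ) = α := by rw [htAC]; exact div_mul_cancel₀ _ hαγ
    have hy : py0 * (A + (sAC / (2 * sAC - 1)) • (C - A)) 0 + py1 * (A + (sAC / (2 * sAC - 1)) • (C - A)) 1 + py2 = (0 : ℝ) := by
      simp only [coord_add_smul]
      rw [hpy0, hpy1, hpy2]
      simp only [crs, PiLp.sub_apply]
      ring
    have hz : qz0 * (A + (sAC / (2 * sAC - 1)) • (C - A)) 0 + qz1 * (A + (sAC / (2 * sAC - 1)) • (C - A)) 1 + qz2 = (sAC / (2 * sAC - 1)) * M := by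
      simp only [coord_add_smul]
      rw [hqz0, hqz1, hqz2, hMv]
      simp only [crs, PiLp.sub_apply]
      ring
    have hx : rx0 * (A + (sAC / (2 * sAC - 1)) • (C - A)) 0 + rx1 * (A + (sAC / (2 * sAC - 1)) • (C - A)) 1 + rx2 = M - ((0 : ℝ)) - ((sAC / (2 * sAC - 1)) * M) := by
      rw [hrx0, hrx1, hrx2]
      linear_combination -hy - hz
    rw [hQ, hy, hz, hx, hcA, hcB, hcC, hc2f, hc2g, hc2h]
    refine mul_left_cancel₀ (pow_ne_zero 2 hαγ) ?_
    linear_combination ((M^2 * ((α * v * w) + (γ * (1 - v - w) * v) - (-(v * ((1 - v - w) * α + w * γ))))) * (α + γ) * (sAC / (2 * sAC - 1)) + ((M^2 * (-2 * (α * v * w) + (-(v * ((1 - v - w) * α + w * γ))))) * (α + γ) + (M^2 * ((α * v * w) + (γ * (1 - v - w) * v) - (-(v * ((1 - v - w) * α + w * γ))))) * (α))) * ht2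
  · have ht2 : (sAD / (2 * sAD - 1)) * (α + ((1 - v - w) * α + v * β + w * γ)) = α := by rw [htAD]; exact div_mul_cancel₀ _ hαδ'
    have hy : py0 * (A + (sAD / (2 * sAD - 1)) • (D - A)) 0 + py1 * (A + (sAD / (2 * sAD - 1)) • (D - A)) 1 + py2 = (sAD / (2 * sAD - 1)) * (v * M) := by
      simp only [coord_add_smul]
      rw [hpy0, hpy1, hpy2, hMv, hDc0, hDc1]
      simp only [crs, PiLp.sub_apply]
      ring
    have hz : qz0 * (A + (sAD / (2 * sAD - 1)) • (D - A)) 0 + qz1 * (A + (sAD / (2 * sAD - 1)) • (D - A)) 1 + qz2 = (sAD / (2 * sAD - 1)) * (w * M) := by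
      simp only [coord_add_smul]
      rw [hqz0, hqz1, hqz2, hMv, hDc0, hDc1]
      simp only [crs, PiLp.sub_apply]
      ring
    have hx : rx0 * (A + (sAD / (2 * sAD - 1)) • (D - A)) 0 + rx1 * (A + (sAD / (2 * sAD - 1)) • (D - A)) 1 + rx2 = M - ((sAD / (2 * sAD - 1)) * (v * M)) - ((sAD / (2 * sAD - 1)) * (w * M)) := by
      rw [hrx0, hrx1, hrx2]
      linear_combination -hy - hz
    rw [hQ, hy, hz, hx, hcA, hcB, hcC, hc2f, hc2g, hc2h]
    refine mul_left_cancel₀ (pow_ne_zero 2 hαδ') ?_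
    linear_combination ((M^2 * ((α * v * w) * (v + w)^2 + (β * (1 - v - w) * w) * v^2 + (γ * (1 - v - w) * v) * w^2 + (-((1 - v - w) * (v * β + w * γ))) * (v * w) - (-(v * ((1 - v - w) * α + w * γ))) * (w * (v + w)) - (-(w * ((1 - v - w) * α + v * β))) * (v * (v + w)))) * (α + ((1 - v - w) * α + v * β + w * γ)) * (sAD / (2 * sAD - 1)) + ((M^2 * (-2 * (α * v * w) * (v + w) + (-(v * ((1 - v - w) * α + w * γ))) * w + (-(w * ((1 - v - w) * α + v * β))) * v)) * (α + ((1 - v - w) * α + v * β + w * γ)) + (M^2 * ((α * v * w) * (v + w)^2 + (β * (1 - v - w) * w) * v^2 + (γ * (1 - v - w) * v) * w^2 + (-((1 - v - w) * (v * β + w * γ))) * (v * w) - (-(v * ((1 - v - w) * α + w * γ))) * (w * (v + w)) - (-(w * ((1 - v - w) * α + v * β))) * (v * (v + w)))) * (α))) * ht2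
  · have ht2 : (sBC / (2 * sBC - 1)) * (β + γ) = β := by rw [htBC]; exact div_mul_cancel₀ _ hβγ
    have hy : py0 * (B + (sBC / (2 * sBC - 1)) • (C - B)) 0 + py1 * (B + (sBC / (2 * sBC - 1)) • (C - B)) 1 + py2 = M - (sBC / (2 * sBC - 1)) * M := by
      simp only [coord_add_smul]
      rw [hpy0, hpy1, hpy2, hMv]
      simp only [crs, PiLp.sub_apply]
      ring
    have hz : qz0 * (B + (sBC / (2 * sBC - 1)) • (C - B)) 0 + qz1 * (B + (sBC / (2 * sBC - 1)) • (C - B)) 1 + qz2 = (sBC / (2 * sBC - 1)) * M := by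
      simp only [coord_add_smul]
      rw [hqz0, hqz1, hqz2, hMv]
      simp only [crs, PiLp.sub_apply]
      ring
    have hx : rx0 * (B + (sBC / (2 * sBC - 1)) • (C - B)) 0 + rx1 * (B + (sBC / (2 * sBC - 1)) • (C - B)) 1 + rx2 = M - (M - (sBC / (2 * sBC - 1)) * M) - ((sBC / (2 * sBC - 1)) * M) := by
      rw [hrx0, hrx1, hrx2]
      linear_combination -hy - hz
    rw [hQ, hy, hz, hx, hcA, hcB, hcC, hc2f, hc2g, hc2h]
    refine mul_left_cancel₀ (pow_ne_zero 2 hβγ) ?_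
    linear_combination ((M^2 * ((β * (1 - v - w) * w) + (γ * (1 - v - w) * v) - (-((1 - v - w) * (v * β + w * γ))))) * (β + γ) * (sBC / (2 * sBC - 1)) + ((M^2 * (-2 * (β * (1 - v - w) * w) + (-((1 - v - w) * (v * β + w * γ))))) * (β + γ) + (M^2 * ((β * (1 - v - w) * w) + (γ * (1 - v - w) * v) - (-((1 - v - w) * (v * β + w * γ))))) * (β))) * ht2
  · have ht2 : (sBD / (2 * sBD - 1)) * (β + ((1 - v - w) * α + v * β + w * γ)) = β := by rw [htBD]; exact div_mul_cancel₀ _ hβδ'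
    have hy : py0 * (B + (sBD / (2 * sBD - 1)) • (D - B)) 0 + py1 * (B + (sBD / (2 * sBD - 1)) • (D - B)) 1 + py2 = M - (sBD / (2 * sBD - 1)) * ((1 - v) * M) := by
      simp only [coord_add_smul]
      rw [hpy0, hpy1, hpy2, hMv, hDc0, hDc1]
      simp only [crs, PiLp.sub_apply]
      ring
    have hz : qz0 * (B + (sBD / (2 * sBD - 1)) • (D - B)) 0 + qz1 * (B + (sBD / (2 * sBD - 1)) • (D - B)) 1 + qz2 = (sBD / (2 * sBD - 1)) * (w * M) := by
      simp only [coord_add_smul]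
      rw [hqz0, hqz1, hqz2, hMv, hDc0, hDc1]
      simp only [crs, PiLp.sub_apply]
      ring
    have hx : rx0 * (B + (sBD / (2 * sBD - 1)) • (D - B)) 0 + rx1 * (B + (sBD / (2 * sBD - 1)) • (D - B)) 1 + rx2 = M - (M - (sBD / (2 * sBD - 1)) * ((1 - v) * M)) - ((sBD / (2 * sBD - 1)) * (w * M)) := by
      rw [hrx0, hrx1, hrx2]
      linear_combination -hy - hz
    rw [hQ, hy, hz, hx, hcA, hcB, hcC, hc2f, hc2g, hc2h]
    refine mul_left_cancel₀ (pow_ne_zero 2 hβδ') ?_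
    linear_combination ((M^2 * ((α * v * w) * (1 - v - w)^2 + (β * (1 - v - w) * w) * (1 - v)^2 + (γ * (1 - v - w) * v) * w^2 - (-((1 - v - w) * (v * β + w * γ))) * (w * (1 - v)) + (-(v * ((1 - v - w) * α + w * γ))) * (w * (1 - v - w)) - (-(w * ((1 - v - w) * α + v * β))) * ((1 - v - w) * (1 - v)))) * (β + ((1 - v - w) * α + v * β + w * γ)) * (sBD / (2 * sBD - 1)) + ((M^2 * (-2 * (β * (1 - v - w) * w) * (1 - v) + (-((1 - v - w) * (v * β + w * γ))) * w + (-(w * ((1 - v - w) * α + v * β))) * (1 - v - w))) * (β + ((1 - v - w) * α + v * β + w * γ)) + (M^2 * ((α * v * w) * (1 - v - w)^2 + (β * (1 - v - w) * w) * (1 - v)^2 + (γ * (1 - v - w) * v) * w^2 - (-((1 - v - w) * (v * β + w * γ))) * (w * (1 - v)) + (-(v * ((1 - v - w) * α + w * γ))) * (w * (1 - v - w)) - (-(w * ((1 - v - w) * α + v * β))) * ((1 - v - w) * (1 - v)))) * (β))) * ht2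
  · have ht2 : (sCD / (2 * sCD - 1)) * (γ + ((1 - v - w) * α + v * β + w * γ)) = γ := by rw [htCD]; exact div_mul_cancel₀ _ hγδ'
    have hy : py0 * (C + (sCD / (2 * sCD - 1)) • (D - C)) 0 + py1 * (C + (sCD / (2 * sCD - 1)) • (D - C)) 1 + py2 = (sCD / (2 * sCD - 1)) * (v * M) := by
      simp only [coord_add_smul]
      rw [hpy0, hpy1, hpy2, hMv, hDc0, hDc1]
      simp only [crs, PiLp.sub_apply]
      ring
    have hz : qz0 * (C + (sCD / (2 * sCD - 1)) • (D - C)) 0 + qz1 * (C + (sCD / (2 * sCD - 1)) • (D - C)) 1 + qz2 = M - (sCD / (2 * sCD - 1)) * ((1 - w) * M) := by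
      simp only [coord_add_smul]
      rw [hqz0, hqz1, hqz2, hMv, hDc0, hDc1]
      simp only [crs, PiLp.sub_apply]
      ring
    have hx : rx0 * (C + (sCD / (2 * sCD - 1)) • (D - C)) 0 + rx1 * (C + (sCD / (2 * sCD - 1)) • (D - C)) 1 + rx2 = M - ((sCD / (2 * sCD - 1)) * (v * M)) - (M - (sCD / (2 * sCD - 1)) * ((1 - w) * M)) := by
      rw [hrx0, hrx1, hrx2]
      linear_combination -hy - hz
    rw [hQ, hy, hz, hx, hcA, hcB, hcC, hc2f, hc2g, hc2h]
    refine mul_left_cancel₀ (pow_ne_zero 2 hγδ') ?_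
    linear_combination ((M^2 * ((α * v * w) * (1 - v - w)^2 + (β * (1 - v - w) * w) * v^2 + (γ * (1 - v - w) * v) * (1 - w)^2 - (-((1 - v - w) * (v * β + w * γ))) * (v * (1 - w)) - (-(v * ((1 - v - w) * α + w * γ))) * ((1 - v - w) * (1 - w)) + (-(w * ((1 - v - w) * α + v * β))) * ((1 - v - w) * v))) * (γ + ((1 - v - w) * α + v * β + w * γ)) * (sCD / (2 * sCD - 1)) + ((M^2 * (-2 * (γ * (1 - v - w) * v) * (1 - w) + (-((1 - v - w) * (v * β + w * γ))) * v + (-(v * ((1 - v - w) * α + w * γ))) * (1 - v - w))) * (γ + ((1 - v - w) * α + v * β + w * γ)) + (M^2 * ((α * v * w) * (1 - v - w)^2 + (β * (1 - v - w) * w) * v^2 + (γ * (1 - v - w) * v) * (1 - w)^2 - (-((1 - v - w) * (v * β + w * γ))) * (v * (1 - w)) - (-(v * ((1 - v - w) * α + w * γ))) * ((1 - v - w) * (1 - w)) + (-(w * ((1 - v - w) * α + v * β))) * ((1 - v - w) * v))) * (γ))) * ht2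
  · rw [hA₁eq]
    have ht2 : (1 / (v + w)) * (v + w) = 1 := by exact one_div_mul_cancel hvw
    have hy : py0 * (A + (1 / (v + w)) • (D - A)) 0 + py1 * (A + (1 / (v + w)) • (D - A)) 1 + py2 = (1 / (v + w)) * (v * M) := by
      simp only [coord_add_smul]
      rw [hpy0, hpy1, hpy2, hMv, hDc0, hDc1]
      simp only [crs, PiLp.sub_apply]
      ring
    have hz : qz0 * (A + (1 / (v + w)) • (D - A)) 0 + qz1 * (A + (1 / (v + w)) • (D - A)) 1 + qz2 = (1 / (v + w)) * (w * M) := by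
      simp only [coord_add_smul]
      rw [hqz0, hqz1, hqz2, hMv, hDc0, hDc1]
      simp only [crs, PiLp.sub_apply]
      ring
    have hx : rx0 * (A + (1 / (v + w)) • (D - A)) 0 + rx1 * (A + (1 / (v + w)) • (D - A)) 1 + rx2 = M - ((1 / (v + w)) * (v * M)) - ((1 / (v + w)) * (w * M)) := by
      rw [hrx0, hrx1, hrx2]
      linear_combination -hy - hz
    rw [hQ, hy, hz, hx, hcA, hcB, hcC, hc2f, hc2g, hc2h]
    refine mul_left_cancel₀ (pow_ne_zero 2 hvw) ?_
    linear_combination ((M^2 * ((α * v * w) * (v + w)^2 + (β * (1 - v - w) * w) * v^2 + (γ * (1 - v - w) * v) * w^2 + (-((1 - v - w) * (v * β + w * γ))) * (v * w) - (-(v * ((1 - v - w) * α + w * γ))) * (w * (v + w)) - (-(w * ((1 - v - w) * α + v * β))) * (v * (v + w)))) * (v + w) * (1 / (v + w)) + ((M^2 * (-2 * (α * v * w) * (v + w) + (-(v * ((1 - v - w) * α + w * γ))) * w + (-(w * ((1 - v - w) * α + v * β))) * v)) * (v + w) + (M^2 * ((α * v * w) * (v + w)^2 + (β * (1 - v - w)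 * w) * v^2 + (γ * (1 - v - w) * v) * w^2 + (-((1 - v - w) * (v * β + w * γ))) * (v * w) - (-(v * ((1 - v - w) * α + w * γ))) * (w * (v + w)) - (-(w * ((1 - v - w) * α + v * β))) * (v * (v + w)))) * (1))) * ht2
  · rw [hB₁eq]
    have ht2 : (v / (1 - w)) * (1 - w) = v := by exact div_mul_cancel₀ _ h1w
    have hy : py0 * (A + (v / (1 - w)) • (B - A)) 0 + py1 * (A + (v / (1 - w)) • (B - A)) 1 + py2 = (v / (1 - w)) * M := by
      simp only [coord_add_smul]
      rw [hpy0, hpy1, hpy2, hMv]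
      simp only [crs, PiLp.sub_apply]
      ring
    have hz : qz0 * (A + (v / (1 - w)) • (B - A)) 0 + qz1 * (A + (v / (1 - w)) • (B - A)) 1 + qz2 = (0 : ℝ) := by
      simp only [coord_add_smul]
      rw [hqz0, hqz1, hqz2]
      simp only [crs, PiLp.sub_apply]
      ring
    have hx : rx0 * (A + (v / (1 - w)) • (B - A)) 0 + rx1 * (A + (v / (1 - w)) • (B - A)) 1 + rx2 = M - ((v / (1 - w)) * M) - ((0 : ℝ)) := by
      rw [hrx0, hrx1, hrx2]
      linear_combination -hy - hz
    rw [hQ, hy, hz, hx, hcA, hcB, hcC, hc2f, hc2g, hc2h]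
    refine mul_left_cancel₀ (pow_ne_zero 2 h1w) ?_
    linear_combination ((M^2 * ((α * v * w) + (β * (1 - v - w) * w) - (-(w * ((1 - v - w) * α + v * β))))) * (1 - w) * (v / (1 - w)) + ((M^2 * (-2 * (α * v * w) + (-(w * ((1 - v - w) * α + v * β))))) * (1 - w) + (M^2 * ((α * v * w) + (β * (1 - v - w) * w) - (-(w * ((1 - v - w) * α + v * β))))) * (v))) * ht2
  · rw [hC₁eq]
    have ht2 : (w / (1 - v)) * (1 - v) = w := by exact div_mul_cancel₀ _ h1v
    have hy : py0 * (A + (w / (1 - v)) • (C - A)) 0 + py1 * (A + (w / (1 - v)) • (C - A)) 1 + py2 = (0 : ℝ) := by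
      simp only [coord_add_smul]
      rw [hpy0, hpy1, hpy2]
      simp only [crs, PiLp.sub_apply]
      ring
    have hz : qz0 * (A + (w / (1 - v)) • (C - A)) 0 + qz1 * (A + (w / (1 - v)) • (C - A)) 1 + qz2 = (w / (1 - v)) * M := by
      simp only [coord_add_smul]
      rw [hqz0, hqz1, hqz2, hMv]
      simp only [crs, PiLp.sub_apply]
      ring
    have hx : rx0 * (A + (w / (1 - v)) • (C - A)) 0 + rx1 * (A + (w / (1 - v)) • (C - A)) 1 + rx2 = M - ((0 : ℝ)) - ((w / (1 - v)) * M) := by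
      rw [hrx0, hrx1, hrx2]
      linear_combination -hy - hz
    rw [hQ, hy, hz, hx, hcA, hcB, hcC, hc2f, hc2g, hc2h]
    refine mul_left_cancel₀ (pow_ne_zero 2 h1v) ?_
    linear_combination ((M^2 * ((α * v * w) + (γ * (1 - v - w) * v) - (-(v * ((1 - v - w) * α + w * γ))))) * (1 - v) * (w / (1 - v)) + ((M^2 * (-2 * (α * v * w) + (-(v * ((1 - v - w) * α + w * γ))))) * (1 - v) + (M^2 * ((α * v * w) + (γ * (1 - v - w) * v) - (-(v * ((1 - v - w) * α + w * γ))))) * (w))) * ht2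
end

section
/- Let a, b, c, d ∈ ℝ³ be in general position, and let e, f, g ∈ ℝ³ be nonzero vectors with e ∈ span{a, d} ∩ span{b, c}, f ∈ span{a, b} ∩ span{c, d}, g ∈ span{a, c} ∩ span{b, d} (the diagonal points of the projective quadrangle). Let φ be a nonzero linear functional on ℝ³ with φ(a) ≠ 0, φ(b) ≠ 0, φ(c) ≠ 0, φ(d) ≠ 0 (a line avoiding the four points). Then there exists a nonzero quadratic form G on ℝ³ with G(e) = G(f) = G(g) = 0 such that for every quadratic form Q on ℝ³ vanishing at a, b, c, d whose polar form B_Q is nondegenerate, and for every p ∈ ℝ³ with B_Q(p, x) = φ(x) for all x ∈ ℝ³ (the pole of the line {φ = 0} with respect to Q), one has G(p) = 0. That is, the poles of a fixed line with respect to all conics of the pencil through four points lie on one conic circumscribed about the diagonal triangle. -/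
open QuadraticMap Submodule

private lemma indep3 {x y z : Fin 3 → ℝ} (h : LinearIndependent ℝ ![x, y, z])
    {r s t : ℝ} (hr : r • x + s • y + t • z = 0) : r = 0 ∧ s = 0 ∧ t = 0 := by
  have h2 := Fintype.linearIndependent_iff.mp h ![r, s, t] (by
    simpa [Fin.sum_univ_three] using hr)
  exact ⟨h2 0, h2 1, h2 2⟩

/-- **Poles of a fixed line with respect to a pencil of conics.** Let `a, b, c, d ∈ ℝ³` be in
general position (every three linearly independent), with diagonal points `e, f, g` of the
projective quadrangle, and let `φ` be a nonzero linear functional not vanishing at any of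
`a, b, c, d` (a line avoiding the four points).  Then there is a nonzero quadratic form `G`
vanishing at `e, f, g` such that for every quadratic form `Q` vanishing at `a, b, c, d` with
nondegenerate polar form `B_Q(x, y) = (Q(x+y) - Q(x) - Q(y))/2`, the pole `p` of the line
`{φ = 0}` with respect to `Q` (characterized by `B_Q(p, ·) = φ`) satisfies `G(p) = 0`. -/
theorem poles_of_line_lie_on_conic
    (a b c d e f g : Fin 3 → ℝ)
    (h1 : LinearIndependent ℝ ![a, b, c])
    (h2 : LinearIndependent ℝ ![a, b, d])
    (h3 : LinearIndependent ℝ ![a, c, d])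
    (h4 : LinearIndependent ℝ ![b, c, d])
    (he0 : e ≠ 0) (he1 : e ∈ Submodule.span ℝ {a, d}) (he2 : e ∈ Submodule.span ℝ {b, c})
    (hf0 : f ≠ 0) (hf1 : f ∈ Submodule.span ℝ {a, b}) (hf2 : f ∈ Submodule.span ℝ {c, d})
    (hg0 : g ≠ 0) (hg1 : g ∈ Submodule.span ℝ {a, c}) (hg2 : g ∈ Submodule.span ℝ {b, d})
    (φ : (Fin 3 → ℝ) →ₗ[ℝ] ℝ) (hφ : φ ≠ 0)
    (hφa : φ a ≠ 0) (hφb : φ b ≠ 0) (hφc : φ c ≠ 0) (hφd : φ d ≠ 0) :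
    ∃ G : QuadraticForm ℝ (Fin 3 → ℝ), G ≠ 0 ∧ G e = 0 ∧ G f = 0 ∧ G g = 0 ∧
      ∀ Q : QuadraticForm ℝ (Fin 3 → ℝ),
        Q a = 0 → Q b = 0 → Q c = 0 → Q d = 0 →
        -- the polar form of `Q` is nondegenerate
        (∀ x : Fin 3 → ℝ, (∀ y : Fin 3 → ℝ, (Q (x + y) - Q x - Q y) / 2 = 0) → x = 0) →
        ∀ p : Fin 3 → ℝ,
          (∀ x : Fin 3 → ℝ, (Q (p + x) - Q p - Q x) / 2 = φ x) →
          G p = 0 := by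
  have hcard : Fintype.card (Fin 3) = Module.finrank ℝ (Fin 3 → ℝ) := by
    simp [Module.finrank_fintype_fun_eq_card]
  -- basis a, b, c and coordinates of d
  let B1 : Module.Basis (Fin 3) ℝ (Fin 3 → ℝ) := basisOfLinearIndependentOfCardEqFinrank h1 hcard
  have hB1 : ∀ i, B1 i = ![a, b, c] i := fun i =>
    congrFun (coe_basisOfLinearIndependentOfCardEqFinrank h1 hcard) i
  obtain ⟨α, β, γ, hd⟩ : ∃ α β γ : ℝ, α • a + β • b + γ • c = d := by
    refine ⟨B1.repr d 0, B1.repr d 1, B1.repr d 2, ?_⟩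
    have := B1.sum_repr d
    rw [Fin.sum_univ_three] at this
    rw [hB1 0, hB1 1, hB1 2] at this
    simpa using this
  have hα : α ≠ 0 := by
    intro h0
    have hrel : β • b + γ • c + (-1 : ℝ) • d = 0 := by
      rw [← hd, h0]; simp; abel
    have := (indep3 h4 hrel).2.2
    norm_num at this
  have hβ : β ≠ 0 := by
    intro h0
    have hrel : α • a + γ • c + (-1 : ℝ) • d = 0 := by
      rw [← hd, h0]; simp; abel
    have := (indep3 h3 hrel).2.2
    norm_num at this
  have hγ : γ ≠ 0 := by
    intro h0
    have hrel : α • a + β • b + (-1 : ℝ) • d = 0 := by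
      rw [← hd, h0]; simp; abel
    have := (indep3 h2 hrel).2.2
    norm_num at this
  -- scaled basis v₀ = α•a, v₁ = β•b, v₂ = γ•c, so that d = v₀ + v₁ + v₂
  have hv : LinearIndependent ℝ ![α • a, β • b, γ • c] := by
    rw [Fintype.linearIndependent_iff]
    intro gc hgc
    have hrel : (gc 0 * α) • a + (gc 1 * β) • b + (gc 2 * γ) • c = 0 := by
      rw [Fin.sum_univ_three] at hgc
      simpa [smul_smul] using hgc
    obtain ⟨e0, e1, e2⟩ := indep3 h1 hrel
    intro i
    fin_cases i
    · exact (mul_eq_zero.mp e0).resolve_right hα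
    · exact (mul_eq_zero.mp e1).resolve_right hβ
    · exact (mul_eq_zero.mp e2).resolve_right hγ
  let Bs : Module.Basis (Fin 3) ℝ (Fin 3 → ℝ) := basisOfLinearIndependentOfCardEqFinrank hv hcard
  have hBs0 : Bs 0 = α • a := congrFun (coe_basisOfLinearIndependentOfCardEqFinrank hv hcard) 0
  have hBs1 : Bs 1 = β • b := congrFun (coe_basisOfLinearIndependentOfCardEqFinrank hv hcard) 1
  have hBs2 : Bs 2 = γ • c := congrFun (coe_basisOfLinearIndependentOfCardEqFinrank hv hcard) 2
  have hdBs : d = Bs 0 + Bs 1 + Bs 2 := by rw [hBs0, hBs1, hBs2, hd]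
  obtain ⟨u, hu_def⟩ : ∃ u : ℝ, φ (Bs 0) = u := ⟨_, rfl⟩
  obtain ⟨v, hv_def⟩ : ∃ v : ℝ, φ (Bs 1) = v := ⟨_, rfl⟩
  obtain ⟨w, hw_def⟩ : ∃ w : ℝ, φ (Bs 2) = w := ⟨_, rfl⟩
  have hu : u ≠ 0 := by
    rw [← hu_def, hBs0, LinearMap.map_smul, smul_eq_mul]
    exact mul_ne_zero hα hφa
  -- coordinate functionals
  have hc : ∀ i j : Fin 3, Bs.coord i (Bs j) = if j = i then 1 else 0 := by
    intro i j
    rw [Module.Basis.coord_apply, Module.Basis.repr_self, Finsupp.single_apply]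
  have hc00 : Bs.coord 0 (Bs 0) = 1 := by rw [hc, if_pos rfl]
  have hc01 : Bs.coord 0 (Bs 1) = 0 := by rw [hc, if_neg (by decide)]
  have hc02 : Bs.coord 0 (Bs 2) = 0 := by rw [hc, if_neg (by decide)]
  have hc10 : Bs.coord 1 (Bs 0) = 0 := by rw [hc, if_neg (by decide)]
  have hc11 : Bs.coord 1 (Bs 1) = 1 := by rw [hc, if_pos rfl]
  have hc12 : Bs.coord 1 (Bs 2) = 0 := by rw [hc, if_neg (by decide)]
  have hc20 : Bs.coord 2 (Bs 0) = 0 := by rw [hc, if_neg (by decide)]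
  have hc21 : Bs.coord 2 (Bs 1) = 0 := by rw [hc, if_neg (by decide)]
  have hc22 : Bs.coord 2 (Bs 2) = 1 := by rw [hc, if_pos rfl]
  -- the conic G
  refine ⟨u • linMulLin (Bs.coord 0) (Bs.coord 0) + v • linMulLin (Bs.coord 1) (Bs.coord 1)
      + w • linMulLin (Bs.coord 2) (Bs.coord 2)
      - (v + w) • linMulLin (Bs.coord 1) (Bs.coord 2)
      - (u + w) • linMulLin (Bs.coord 0) (Bs.coord 2)
      - (u + v) • linMulLin (Bs.coord 0) (Bs.coord 1), ?_, ?_, ?_, ?_, ?_⟩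
  case refine_5 =>
    intro Q hQa hQb hQc hQd _ p hp
    -- values of Q on the scaled basis
    have hQ0 : Q (Bs 0) = 0 := by rw [hBs0, QuadraticMap.map_smul, hQa]; simp
    have hQ1 : Q (Bs 1) = 0 := by rw [hBs1, QuadraticMap.map_smul, hQb]; simp
    have hQ2 : Q (Bs 2) = 0 := by rw [hBs2, QuadraticMap.map_smul, hQc]; simp
    have hps0 : polar Q (Bs 0) (Bs 0) = 0 := by rw [polar_self, hQ0]; simp
    have hps1 : polar Q (Bs 1) (Bs 1) = 0 := by rw [polar_self, hQ1]; simp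
    have hps2 : polar Q (Bs 2) (Bs 2) = 0 := by rw [polar_self, hQ2]; simp
    -- relation from Q d = 0
    have hQadd : ∀ x y : Fin 3 → ℝ, Q (x + y) = Q x + Q y + polar Q x y := by
      intro x y; rw [polar]; ring
    have g4 : polar Q (Bs 0) (Bs 1) + polar Q (Bs 0) (Bs 2) + polar Q (Bs 1) (Bs 2) = 0 := by
      have hQD : Q d = Q (Bs 0) + Q (Bs 1) + Q (Bs 2)
          + polar Q (Bs 0) (Bs 1) + polar Q (Bs 0) (Bs 2) + polar Q (Bs 1) (Bs 2) := by
        rw [hdBs, hQadd (Bs 0 + Bs 1) (Bs 2), hQadd (Bs 0) (Bs 1), polar_add_left]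
        ring
      rw [hQd, hQ0, hQ1, hQ2] at hQD
      linarith
    -- coordinates of the pole
    have hpXYZ : (Bs.repr p 0) • Bs 0 + (Bs.repr p 1) • Bs 1 + (Bs.repr p 2) • Bs 2 = p := by
      have := Bs.sum_repr p
      rw [Fin.sum_univ_three] at this
      exact this
    have hpolarp : ∀ x, polar Q p x = 2 * φ x := by
      intro x
      have := hp x
      rw [polar]
      linarith
    have hpolar_exp : ∀ x, polar Q p x
        = (Bs.repr p 0) * polar Q (Bs 0) x + (Bs.repr p 1) * polar Q (Bs 1) x
          + (Bs.repr p 2) * polar Q (Bs 2) x := by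
      intro x
      conv_lhs => rw [← hpXYZ]
      rw [polar_add_left, polar_add_left, polar_smul_left, polar_smul_left,
        polar_smul_left, smul_eq_mul, smul_eq_mul, smul_eq_mul]
    have g1 : (Bs.repr p 1) * polar Q (Bs 0) (Bs 1) + (Bs.repr p 2) * polar Q (Bs 0) (Bs 2)
        = 2 * u := by
      have h := hpolarp (Bs 0)
      rw [hpolar_exp (Bs 0), hps0, polar_comm Q (Bs 1) (Bs 0), polar_comm Q (Bs 2) (Bs 0),
        hu_def] at h
      linarith
    have g2 : (Bs.repr p 0) * polar Q (Bs 0) (Bs 1) + (Bs.repr p 2) * polar Q (Bs 1) (Bs 2)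
        = 2 * v := by
      have h := hpolarp (Bs 1)
      rw [hpolar_exp (Bs 1), hps1, polar_comm Q (Bs 2) (Bs 1), hv_def] at h
      linarith
    have g3 : (Bs.repr p 0) * polar Q (Bs 0) (Bs 2) + (Bs.repr p 1) * polar Q (Bs 1) (Bs 2)
        = 2 * w := by
      have h := hpolarp (Bs 2)
      rw [hpolar_exp (Bs 2), hps2, hw_def] at h
      linarith
    -- the certificate
    simp only [QuadraticMap.add_apply, QuadraticMap.sub_apply, QuadraticMap.smul_apply,
      linMulLin_apply, smul_eq_mul, Module.Basis.coord_apply]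
    set X : ℝ := Bs.repr p 0
    set Y : ℝ := Bs.repr p 1
    set Z : ℝ := Bs.repr p 2
    linear_combination (-(X ^ 2 - X * Z - X * Y) / 2) * g1 + (-(Y ^ 2 - Y * Z - X * Y) / 2) * g2
      + (-(Z ^ 2 - Y * Z - X * Z) / 2) * g3 + (-(X * Y * Z)) * g4
  case refine_1 =>
    -- nonzero: the value at Bs 0 is u ≠ 0
    intro h0
    apply hu
    have hval := congrFun (congrArg (fun (F : QuadraticForm ℝ (Fin 3 → ℝ)) => F.toFun) h0) (Bs 0)
    simp only [QuadraticMap.toFun_eq_coe] at hval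
    rw [show ((0 : QuadraticForm ℝ (Fin 3 → ℝ)) (Bs 0)) = 0 from rfl] at hval
    rw [QuadraticMap.sub_apply, QuadraticMap.sub_apply, QuadraticMap.sub_apply,
      QuadraticMap.add_apply, QuadraticMap.add_apply, QuadraticMap.smul_apply,
      QuadraticMap.smul_apply, QuadraticMap.smul_apply, QuadraticMap.smul_apply,
      QuadraticMap.smul_apply, QuadraticMap.smul_apply, linMulLin_apply, linMulLin_apply,
      linMulLin_apply, linMulLin_apply, linMulLin_apply, linMulLin_apply,
      hc00, hc10, hc20] at hval
    simpa using hval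
  case refine_2 =>
    obtain ⟨t, ht⟩ : ∃ t : ℝ, e = t • Bs 1 + t • Bs 2 := by
      obtain ⟨p1, q1, hpq⟩ := mem_span_pair.mp he1
      obtain ⟨s1, t1, hst⟩ := mem_span_pair.mp he2
      have hrel : (p1 + q1 * α) • a + (q1 * β - s1) • b + (q1 * γ - t1) • c = 0 := by
        have h5 : p1 • a + q1 • d - (s1 • b + t1 • c) = 0 := by rw [hpq, hst]; simp
        rw [← hd] at h5
        rw [show (p1 + q1 * α) • a + (q1 * β - s1) • b + (q1 * γ - t1) • c
          = p1 • a + q1 • (α • a + β • b + γ • c) - (s1 • b + t1 • c) by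
            simp [smul_add, smul_smul, sub_smul, add_smul]; abel]
        exact h5
      obtain ⟨-, e1, e2⟩ := indep3 h1 hrel
      refine ⟨q1, ?_⟩
      rw [← hst, hBs1, hBs2, smul_smul, smul_smul]
      rw [show s1 = q1 * β by linarith, show t1 = q1 * γ by linarith]
    rw [ht]
    simp only [QuadraticMap.add_apply, QuadraticMap.sub_apply, QuadraticMap.smul_apply,
      linMulLin_apply, smul_eq_mul, map_add, LinearMap.map_smul,
      hc00, hc01, hc02, hc10, hc11, hc12, hc20, hc21, hc22]
    ring
  case refine_3 =>
    obtain ⟨t, ht⟩ : ∃ t : ℝ, f = t • Bs 0 + t • Bs 1 := by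
      obtain ⟨s1, t1, hst⟩ := mem_span_pair.mp hf1
      obtain ⟨p1, q1, hpq⟩ := mem_span_pair.mp hf2
      have hrel : (q1 * α - s1) • a + (q1 * β - t1) • b + (q1 * γ + p1) • c = 0 := by
        have h5 : p1 • c + q1 • d - (s1 • a + t1 • b) = 0 := by rw [hpq, hst]; simp
        rw [← hd] at h5
        rw [show (q1 * α - s1) • a + (q1 * β - t1) • b + (q1 * γ + p1) • c
          = p1 • c + q1 • (α • a + β • b + γ • c) - (s1 • a + t1 • b) by
            simp [smul_add, smul_smul, sub_smul, add_smul]; abel]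
        exact h5
      obtain ⟨e0, e1, -⟩ := indep3 h1 hrel
      refine ⟨q1, ?_⟩
      rw [← hst, hBs0, hBs1, smul_smul, smul_smul]
      rw [show s1 = q1 * α by linarith, show t1 = q1 * β by linarith]
    rw [ht]
    simp only [QuadraticMap.add_apply, QuadraticMap.sub_apply, QuadraticMap.smul_apply,
      linMulLin_apply, smul_eq_mul, map_add, LinearMap.map_smul,
      hc00, hc01, hc02, hc10, hc11, hc12, hc20, hc21, hc22]
    ring
  case refine_4 =>
    obtain ⟨t, ht⟩ : ∃ t : ℝ, g = t • Bs 0 + t • Bs 2 := by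
      obtain ⟨s1, t1, hst⟩ := mem_span_pair.mp hg1
      obtain ⟨p1, q1, hpq⟩ := mem_span_pair.mp hg2
      have hrel : (q1 * α - s1) • a + (q1 * β + p1) • b + (q1 * γ - t1) • c = 0 := by
        have h5 : p1 • b + q1 • d - (s1 • a + t1 • c) = 0 := by rw [hpq, hst]; simp
        rw [← hd] at h5
        rw [show (q1 * α - s1) • a + (q1 * β + p1) • b + (q1 * γ - t1) • c
          = p1 • b + q1 • (α • a + β • b + γ • c) - (s1 • a + t1 • c) by
            simp [smul_add, smul_smul, sub_smul, add_smul]; abel]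
        exact h5
      obtain ⟨e0, -, e2⟩ := indep3 h1 hrel
      refine ⟨q1, ?_⟩
      rw [← hst, hBs0, hBs2, smul_smul, smul_smul]
      rw [show s1 = q1 * α by linarith, show t1 = q1 * γ by linarith]
    rw [ht]
    simp only [QuadraticMap.add_apply, QuadraticMap.sub_apply, QuadraticMap.smul_apply,
      linMulLin_apply, smul_eq_mul, map_add, LinearMap.map_smul,
      hc00, hc01, hc02, hc10, hc11, hc12, hc20, hc21, hc22]
    ring
end

section
/- Let a, b, c, d ∈ ℝ³ be in general position and let h ∈ ℝ³ be nonzero. Then there exists a nonzero vector h' ∈ ℝ³ such that B_Q(h, h') = 0 for every quadratic form Q on ℝ³ vanishing at a, b, c and d. That is, the polars of a given point with respect to all the conics circumscribed about a quadrangle pass through one common point. -/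
/-- The polars of a given point `h` with respect to all the conics circumscribed about a
quadrangle `a, b, c, d` in general position pass through one common point: there is a nonzero
`h'` with `B_Q(h, h') = 0` for every quadratic form `Q` vanishing at `a, b, c, d`, where
`B_Q(x, y) = (Q(x+y) - Q(x) - Q(y))/2` is the polar form of `Q`. -/
theorem polars_pass_through_common_point
    (a b c d h : Fin 3 → ℝ)
    (h1 : LinearIndependent ℝ ![a, b, c])
    (h2 : LinearIndependent ℝ ![a, b, d])
    (h3 : LinearIndependent ℝ ![a, c, d])
    (h4 : LinearIndependent ℝ ![b, c, d])
    (hh : h ≠ 0) :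
    ∃ h' : Fin 3 → ℝ, h' ≠ 0 ∧
      ∀ Q : QuadraticForm ℝ (Fin 3 → ℝ),
        Q a = 0 → Q b = 0 → Q c = 0 → Q d = 0 →
        (Q (h + h') - Q h - Q h') / 2 = 0 := by
  classical
  have hcard : Fintype.card (Fin 3) = Module.finrank ℝ (Fin 3 → ℝ) := by simp
  set B : Module.Basis (Fin 3) ℝ (Fin 3 → ℝ) := basisOfLinearIndependentOfCardEqFinrank h1 hcard
    with hBdef
  have hB : ⇑B = ![a, b, c] := coe_basisOfLinearIndependentOfCardEqFinrank h1 hcard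
  have hB0 : B 0 = a := by rw [hB]; rfl
  have hB1 : B 1 = b := by rw [hB]; rfl
  have hB2 : B 2 = c := by rw [hB]; rfl
  set α := B.repr d 0 with hα
  set β := B.repr d 1 with hβ
  set γ := B.repr d 2 with hγ
  have hd : α • a + β • b + γ • c = d := by
    have := B.sum_repr d
    rwa [Fin.sum_univ_three, hB0, hB1, hB2] at this
  set x := B.repr h 0 with hx
  set y := B.repr h 1 with hy
  set z := B.repr h 2 with hz
  have hhrep : x • a + y • b + z • c = h := by
    have := B.sum_repr h
    rwa [Fin.sum_univ_three, hB0, hB1, hB2] at this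
  -- the coefficients of d are nonzero
  have hα0 : α ≠ 0 := by
    intro h0
    have hsum : β • b + γ • c + (-1 : ℝ) • d = 0 := by
      rw [← hd, h0]; module
    have := (Fintype.linearIndependent_iff.mp h4) ![β, γ, -1]
      (by rw [Fin.sum_univ_three]; simpa using hsum) 2
    have hm1 : (-1 : ℝ) = 0 := this
    norm_num at hm1
  have hβ0 : β ≠ 0 := by
    intro h0
    have hsum : α • a + γ • c + (-1 : ℝ) • d = 0 := by
      rw [← hd, h0]; module
    have := (Fintype.linearIndependent_iff.mp h3) ![α, γ, -1]
      (by rw [Fin.sum_univ_three]; simpa using hsum) 2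
    have hm1 : (-1 : ℝ) = 0 := this
    norm_num at hm1
  have hγ0 : γ ≠ 0 := by
    intro h0
    have hsum : α • a + β • b + (-1 : ℝ) • d = 0 := by
      rw [← hd, h0]; module
    have := (Fintype.linearIndependent_iff.mp h2) ![α, β, -1]
      (by rw [Fin.sum_univ_three]; simpa using hsum) 2
    have hm1 : (-1 : ℝ) = 0 := this
    norm_num at hm1
  -- a nontrivial solution of the linear system
  set M : Matrix (Fin 3) (Fin 4) ℝ :=
    !![y, x, 0, -(α*β); 0, z, y, -(β*γ); z, 0, x, -(α*γ)] with hM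
  have hninj : ¬ Function.Injective M.mulVecLin := by
    intro hinj
    have := LinearMap.finrank_le_finrank_of_injective hinj
    simp [Module.finrank_pi] at this
  obtain ⟨e₁, e₂, hne, heq⟩ := Function.not_injective_iff.mp hninj
  set e : Fin 4 → ℝ := e₁ - e₂ with he
  have hker : M.mulVec e = 0 := by
    have : M.mulVecLin e₁ - M.mulVecLin e₂ = 0 := by rw [hne]; ring
    simpa [he, Matrix.mulVec_sub] using this
  have hne0 : e ≠ 0 := sub_ne_zero.mpr heq
  set u := e 0 with hu
  set v := e 1 with hv
  set w := e 2 with hw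
  set t := e 3 with ht
  have eq0 : y * u + x * v = α * β * t := by
    have := congrFun hker 0
    simp [hM, Matrix.mulVec, dotProduct, Fin.sum_univ_four, hu, hv, hw, ht] at this
    linarith
  have eq1 : z * v + y * w = β * γ * t := by
    have := congrFun hker 1
    simp [hM, Matrix.mulVec, dotProduct, Fin.sum_univ_four, hu, hv, hw, ht] at this
    linarith
  have eq2 : z * u + x * w = α * γ * t := by
    have := congrFun hker 2
    simp [hM, Matrix.mulVec, dotProduct, Fin.sum_univ_four, hu, hv, hw, ht] at this
    linarith
  have huvw : ¬ (u = 0 ∧ v = 0 ∧ w = 0) := by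
    rintro ⟨hu0, hv0, hw0⟩
    have ht0 : t = 0 := by
      have : α * β * t = 0 := by rw [← eq0, hu0, hv0]; ring
      rcases mul_eq_zero.mp this with h' | h'
      · exact absurd h' (mul_ne_zero hα0 hβ0)
      · exact h'
    apply hne0
    funext i
    fin_cases i
    · exact hu0
    · exact hv0
    · exact hw0
    · exact ht0
  refine ⟨u • a + v • b + w • c, ?_, ?_⟩
  · intro h0
    apply huvw
    have := (Fintype.linearIndependent_iff.mp h1) ![u, v, w]
      (by rw [Fin.sum_univ_three]; simpa using h0)
    exact ⟨this 0, this 1, this 2⟩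
  · intro Q hQa hQb hQc hQd
    set p := QuadraticMap.polar Q a b with hp
    set q := QuadraticMap.polar Q b c with hq
    set r := QuadraticMap.polar Q a c with hr
    have haa : QuadraticMap.polar Q a a = 0 := by
      rw [QuadraticMap.polar_self, hQa]; simp
    have hbb : QuadraticMap.polar Q b b = 0 := by
      rw [QuadraticMap.polar_self, hQb]; simp
    have hcc : QuadraticMap.polar Q c c = 0 := by
      rw [QuadraticMap.polar_self, hQc]; simp
    have hba : QuadraticMap.polar Q b a = p := QuadraticMap.polar_comm Q b a
    have hca : QuadraticMap.polar Q c a = r := QuadraticMap.polar_comm Q c a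
    have hcb : QuadraticMap.polar Q c b = q := QuadraticMap.polar_comm Q c b
    have expand : ∀ s₁ s₂ s₃ s₄ s₅ s₆ : ℝ,
        QuadraticMap.polar Q (s₁ • a + s₂ • b + s₃ • c) (s₄ • a + s₅ • b + s₆ • c) =
          (s₁*s₅ + s₂*s₄) * p + (s₂*s₆ + s₃*s₅) * q + (s₁*s₆ + s₃*s₄) * r := by
      intro s₁ s₂ s₃ s₄ s₅ s₆
      simp only [QuadraticMap.polar_add_left, QuadraticMap.polar_add_right,
        QuadraticMap.polar_smul_left, QuadraticMap.polar_smul_right, smul_eq_mul,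
        haa, hbb, hcc, hba, hca, hcb]
      ring
    have hdd : α*β*p + β*γ*q + α*γ*r = 0 := by
      have h2d : QuadraticMap.polar Q d d = 0 := by
        rw [QuadraticMap.polar_self, hQd]; simp
      have := expand α β γ α β γ
      rw [hd, h2d] at this
      linear_combination -this/2
    have key : QuadraticMap.polar Q h (u • a + v • b + w • c) = 0 := by
      have := expand x y z u v w
      rw [hhrep] at this
      rw [this]
      have hA : x*v + y*u = α*β*t := by linarith
      have hB' : y*w + z*v = β*γ*t := by linarith
      have hC : x*w + z*u = α*γ*t := by linarith
      rw [hA, hB', hC]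
      linear_combination t * hdd
    have : Q (h + (u • a + v • b + w • c)) - Q h - Q (u • a + v • b + w • c) = 0 := key
    rw [this]
    norm_num
end

section
/- Let F ∈ ℝ[X, Y, Z] be a nonzero homogeneous polynomial of degree n, and set a = n − deg_X F, b = n − deg_Y F, c = n − deg_Z F, where deg_X F denotes the degree of F in the variable X (and similarly for Y, Z). Then F(Y·Z, Z·X, X·Y) = X^a · Y^b · Z^c · G for a homogeneous polynomial G of degree 2n − a − b − c, and none of X, Y, Z divides G. (Here a, b, c are the multiplicities of the curve F = 0 at the fundamental points (1:0:0), (0:1:0), (0:0:1) of the standard quadratic transformation, and 2n − a − b − c is the degree of the transformed curve.) -/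
open MvPolynomial

private noncomputable def e3 (p q r : ℕ) : Fin 3 →₀ ℕ :=
  Finsupp.single 0 p + Finsupp.single 1 q + Finsupp.single 2 r

private lemma e3_apply0 (p q r : ℕ) : e3 p q r 0 = p := by
  simp [e3, Finsupp.single_apply]
private lemma e3_apply1 (p q r : ℕ) : e3 p q r 1 = q := by
  simp [e3, Finsupp.single_apply]
private lemma e3_apply2 (p q r : ℕ) : e3 p q r 2 = r := by
  simp [e3, Finsupp.single_apply]

private lemma degree3 (d : Fin 3 →₀ ℕ) : d.degree = d 0 + d 1 + d 2 := by
  rw [Finsupp.degree_apply]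
  rw [Finset.sum_subset (Finset.subset_univ _)
    (by intro i _ hi; exact Finsupp.notMem_support_iff.mp hi)]
  exact Fin.sum_univ_three d

private lemma monomial_e3 (p q r : ℕ) (c : ℝ) :
    (monomial (e3 p q r) c : MvPolynomial (Fin 3) ℝ) = C c * X 0 ^ p * X 1 ^ q * X 2 ^ r := by
  rw [monomial_eq, Finsupp.prod_fintype _ _ (by intro i; simp)]
  rw [Fin.prod_univ_three]
  simp [e3_apply0, e3_apply1, e3_apply2, mul_assoc]

/-- Under the standard quadratic transformation `(x : y : z) ↦ (yz : zx : xy)`, a curve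
`F = 0` of degree `n` with multiplicities `a = n - deg_X F`, `b = n - deg_Y F`,
`c = n - deg_Z F` at the fundamental points transforms as
`F(YZ, ZX, XY) = X^a · Y^b · Z^c · G` with `G` homogeneous of degree `2n - a - b - c` and
divisible by none of `X`, `Y`, `Z`. -/
theorem quadratic_transform_of_curve
    (F : MvPolynomial (Fin 3) ℝ) (n : ℕ)
    (hF : F ≠ 0) (hFhom : F.IsHomogeneous n)
    (a b c : ℕ)
    (ha : a = n - F.degreeOf 0)
    (hb : b = n - F.degreeOf 1)
    (hc : c = n - F.degreeOf 2) :
    ∃ G : MvPolynomial (Fin 3) ℝ,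
      (aeval ![(X 1 : MvPolynomial (Fin 3) ℝ) * X 2, X 2 * X 0, X 0 * X 1]) F =
        X 0 ^ a * X 1 ^ b * X 2 ^ c * G ∧
      G.IsHomogeneous (2 * n - a - b - c) ∧
      ¬ (X 0 : MvPolynomial (Fin 3) ℝ) ∣ G ∧
      ¬ (X 1 : MvPolynomial (Fin 3) ℝ) ∣ G ∧
      ¬ (X 2 : MvPolynomial (Fin 3) ℝ) ∣ G := by
  classical
  set k0 := F.degreeOf 0 with hk0
  set k1 := F.degreeOf 1 with hk1
  set k2 := F.degreeOf 2 with hk2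
  -- basic support facts
  have hsum : ∀ d ∈ F.support, d 0 + d 1 + d 2 = n := by
    intro d hd
    have := hFhom (mem_support_iff.mp hd)
    rw [show (Finsupp.weight 1 : (Fin 3 →₀ ℕ) →+ ℕ) = Finsupp.weight (fun _ => 1) from rfl,
      ← Finsupp.degree_eq_weight_one] at this
    rwa [degree3 d] at this
  have hle0 : ∀ d ∈ F.support, d 0 ≤ k0 := fun d hd => by
    rw [hk0, degreeOf_eq_sup]; exact Finset.le_sup (f := fun m => m 0) hd
  have hle1 : ∀ d ∈ F.support, d 1 ≤ k1 := fun d hd => by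
    rw [hk1, degreeOf_eq_sup]; exact Finset.le_sup (f := fun m => m 1) hd
  have hle2 : ∀ d ∈ F.support, d 2 ≤ k2 := fun d hd => by
    rw [hk2, degreeOf_eq_sup]; exact Finset.le_sup (f := fun m => m 2) hd
  have htd : F.totalDegree = n := hFhom.totalDegree hF
  have hk0n : k0 ≤ n := htd ▸ F.degreeOf_le_totalDegree 0
  have hk1n : k1 ≤ n := htd ▸ F.degreeOf_le_totalDegree 1
  have hk2n : k2 ≤ n := htd ▸ F.degreeOf_le_totalDegree 2
  -- the quotient polynomial
  set ψ : (Fin 3 →₀ ℕ) → (Fin 3 →₀ ℕ) := fun d => e3 (k0 - d 0) (k1 - d 1) (k2 - d 2) with hψ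
  set G : MvPolynomial (Fin 3) ℝ :=
    ∑ d ∈ F.support, monomial (ψ d) (F.coeff d) with hG
  have hψinj : ∀ d ∈ F.support, ∀ d' ∈ F.support, ψ d = ψ d' → d = d' := by
    intro d hd d' hd' h
    have h0 : k0 - d 0 = k0 - d' 0 := by
      have := congrArg (fun m => m 0) h; simpa [hψ, e3_apply0] using this
    have h1 : k1 - d 1 = k1 - d' 1 := by
      have := congrArg (fun m => m 1) h; simpa [hψ, e3_apply1] using this
    have h2 : k2 - d 2 = k2 - d' 2 := by
      have := congrArg (fun m => m 2) h; simpa [hψ, e3_apply2] using this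
    have e0 := hle0 d hd; have e0' := hle0 d' hd'
    have e1 := hle1 d hd; have e1' := hle1 d' hd'
    have e2 := hle2 d hd; have e2' := hle2 d' hd'
    have g0 : d 0 = d' 0 := by omega
    have g1 : d 1 = d' 1 := by omega
    have g2 : d 2 = d' 2 := by omega
    ext i
    fin_cases i
    · exact g0
    · exact g1
    · exact g2
  -- key coefficient computation for G
  have hcoeffG : ∀ d ∈ F.support, G.coeff (ψ d) = F.coeff d := by
    intro d hd
    rw [hG, coeff_sum]
    rw [Finset.sum_eq_single d]
    · simp [coeff_monomial]
    · intro d' hd' hne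
      rw [coeff_monomial, if_neg]
      intro h
      exact hne (hψinj d' hd' d hd h)
    · intro h; exact absurd hd h
  refine ⟨G, ?_, ?_, ?_, ?_, ?_⟩
  · -- main equation
    conv_lhs => rw [F.as_sum]
    rw [map_sum, hG, Finset.mul_sum]
    apply Finset.sum_congr rfl
    intro d hd
    rw [aeval_monomial, Finsupp.prod_fintype _ _ (by intro i; simp), Fin.prod_univ_three]
    simp only [Matrix.cons_val_zero, Matrix.cons_val_one, Matrix.head_cons,
      Matrix.cons_val_two, Matrix.tail_cons]
    rw [monomial_e3]
    rw [algebraMap_eq]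
    have h0 := hle0 d hd; have h1 := hle1 d hd; have h2 := hle2 d hd
    have hs := hsum d hd
    rw [mul_pow, mul_pow, mul_pow]
    rw [show (X 0 ^ a * X 1 ^ b * X 2 ^ c * (C (F.coeff d) * X 0 ^ (k0 - d 0) * X 1 ^ (k1 - d 1)
        * X 2 ^ (k2 - d 2)) : MvPolynomial (Fin 3) ℝ)
      = C (F.coeff d) * (X 0 ^ a * X 0 ^ (k0 - d 0)) * (X 1 ^ b * X 1 ^ (k1 - d 1))
        * (X 2 ^ c * X 2 ^ (k2 - d 2)) from by ring]
    rw [← pow_add, ← pow_add, ← pow_add]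
    rw [show a + (k0 - d 0) = d 1 + d 2 from by omega,
      show b + (k1 - d 1) = d 0 + d 2 from by omega,
      show c + (k2 - d 2) = d 0 + d 1 from by omega]
    ring
  · -- homogeneity
    rw [hG]
    apply IsHomogeneous.sum
    intro d hd
    apply isHomogeneous_monomial
    rw [hψ, degree3]
    simp only [e3_apply0, e3_apply1, e3_apply2]
    have h0 := hle0 d hd; have h1 := hle1 d hd; have h2 := hle2 d hd
    have hs := hsum d hd
    omega
  · -- X 0 does not divide G
    rintro ⟨H, hH⟩
    obtain ⟨d, hd, hdeq⟩ : ∃ d ∈ F.support, d 0 = k0 := by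
      have hne : F.support.Nonempty := support_nonempty.mpr hF
      obtain ⟨d, hd, hdeq⟩ := Finset.exists_mem_eq_sup F.support hne (fun m => m 0)
      exact ⟨d, hd, by rw [hk0, degreeOf_eq_sup, hdeq]⟩
    have h1 : G.coeff (ψ d) = F.coeff d := hcoeffG d hd
    have h2 : G.coeff (ψ d) = 0 := by
      rw [hH, coeff_X_mul', if_neg]
      simp [hψ, e3_apply0, hdeq]
    exact mem_support_iff.mp hd (h1 ▸ h2)
  · -- X 1 does not divide G
    rintro ⟨H, hH⟩
    obtain ⟨d, hd, hdeq⟩ : ∃ d ∈ F.support, d 1 = k1 := by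
      have hne : F.support.Nonempty := support_nonempty.mpr hF
      obtain ⟨d, hd, hdeq⟩ := Finset.exists_mem_eq_sup F.support hne (fun m => m 1)
      exact ⟨d, hd, by rw [hk1, degreeOf_eq_sup, hdeq]⟩
    have h1 : G.coeff (ψ d) = F.coeff d := hcoeffG d hd
    have h2 : G.coeff (ψ d) = 0 := by
      rw [hH, coeff_X_mul', if_neg]
      simp [hψ, e3_apply1, hdeq]
    exact mem_support_iff.mp hd (h1 ▸ h2)
  · -- X 2 does not divide G
    rintro ⟨H, hH⟩
    obtain ⟨d, hd, hdeq⟩ : ∃ d ∈ F.support, d 2 = k2 := by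
      have hne : F.support.Nonempty := support_nonempty.mpr hF
      obtain ⟨d, hd, hdeq⟩ := Finset.exists_mem_eq_sup F.support hne (fun m => m 2)
      exact ⟨d, hd, by rw [hk2, degreeOf_eq_sup, hdeq]⟩
    have h1 : G.coeff (ψ d) = F.coeff d := hcoeffG d hd
    have h2 : G.coeff (ψ d) = 0 := by
      rw [hH, coeff_X_mul', if_neg]
      simp [hψ, e3_apply2, hdeq]
    exact mem_support_iff.mp hd (h1 ▸ h2)
end
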